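/- For α ∈ (0,1) and M_k ≤ n < M_{k+1}, one has ∑_{i=M_r}^{M_{r+1}−1} (n − M_{r+1} + 1)^{−α−2} · i ≤ C(α) M_r² M_k^{−α−2} for each 1 ≤ r ≤ k−2, and consequently M_k^α ∑_{r=1}^{k−2} ∑_{i=M_r}^{M_{r+1}−1} (n−i)^{−α−2} i ≤ C(α) ∑_{r=1}^{k−2} M_r / M_k. -/

import Mathlib

open MeasureTheory Finset
open scoped ENNReal NNReal

noncomputable section

/-- Discrete measurable structure on each finite cyclic factor. -/
instance (n : ℕ) : MeasurableSpace (ZMod n) := ⊤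

/-- The Vilenkin group determined by the generating sequence `m`. -/
abbrev Vil (m : ℕ → ℕ) : Type := ∀ k, ZMod (m k)

/-- Generalized numbers `M_k`. -/
def Mgen (m : ℕ → ℕ) : ℕ → ℕ
  | 0 => 1
  | k + 1 => m k * Mgen m k

/-- `j`-th digit of `n` in the generalized number system. -/
def vdigit (m : ℕ → ℕ) (n j : ℕ) : ℕ := (n / Mgen m j) % m j

/-- Vilenkin functions `ψ_n = ∏ r_k^{n_k}`. -/
def vpsi (m : ℕ → ℕ) (n : ℕ) (x : Vil m) : ℂ :=
  ∏ k ∈ Finset.range (n + 1),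
    Complex.exp (2 * Real.pi * Complex.I * ((x k).val : ℂ) / (m k : ℂ)) ^ vdigit m n k

/-- Vilenkin–Dirichlet kernels `D_n = ∑_{k<n} ψ_k`. -/
def vD (m : ℕ → ℕ) (n : ℕ) (x : Vil m) : ℂ := ∑ k ∈ Finset.range n, vpsi m k x

/-- Cesàro numbers `A_n^α = ∏_{j=1}^n (α+j) / n!` (so `A_0^α = 1`). -/
def ces (α : ℝ) (n : ℕ) : ℝ := (∏ j ∈ Finset.range n, (α + j + 1)) / n.factorial

/-- The normalized "absolute value" `|u| = ∑_j u_j / M_{j+1}` on a Vilenkin group. -/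
def vabs (m : ℕ → ℕ) (u : Vil m) : ℝ := ∑' j, ((u j).val : ℝ) / Mgen m (j + 1)

/-- Standard subgroup `I_n = {y : y_0 = ⋯ = y_{n-1} = 0}`. -/
def In (m : ℕ → ℕ) (n : ℕ) : Set (Vil m) := {u | ∀ j < n, u j = 0}

/-!
Every `n - i` with `i < M_{r+1}` and `r + 1 < k` is at least `M_{k-1} ≥ M_k / Λ`, because
`n ≥ M_k ≥ 2 M_{k-1}`. Hence `(n - i)^{-α-2} ≲ M_k^{-α-2}`, while the block
`M_r ≤ i < M_{r+1}` contributes at most `M_{r+1}^2 ≲ M_r^2` to `∑ i`. Multiplying by `M_k^α`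
leaves `M_r^2 / M_k^2 ≤ M_r / M_k`.
-/

open Finset

theorem rpow_neg_le_of_le_mul {a x L p : ℝ} (ha : 0 < a) (hL : 0 < L) (h : a ≤ L * x)
    (hp : 0 ≤ p) : x ^ (-p) ≤ L ^ p * a ^ (-p) := by
  have hax : a / L ≤ x := by rwa [div_le_iff₀' hL]
  calc x ^ (-p) ≤ (a / L) ^ (-p) :=
        Real.rpow_le_rpow_of_nonpos (by positivity) hax (neg_nonpos.2 hp)
    _ = L ^ p * a ^ (-p) := by
        rw [Real.div_rpow ha.le hL.le, Real.rpow_neg hL.le, div_inv_eq_mul, mul_comm]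

theorem sum_Ico_cast_le_sq (a b : ℕ) : ∑ i ∈ Ico a b, (i : ℝ) ≤ (b : ℝ) ^ 2 := by
  calc ∑ i ∈ Ico a b, (i : ℝ) ≤ ∑ _i ∈ Ico a b, (b : ℝ) :=
        sum_le_sum fun i hi => by exact_mod_cast (mem_Ico.1 hi).2.le
    _ = ((b - a : ℕ) : ℝ) * b := by rw [sum_const, Nat.card_Ico, nsmul_eq_mul]
    _ ≤ (b : ℝ) * b := by gcongr; exact Nat.sub_le _ _
    _ = (b : ℝ) ^ 2 := (sq _).symm

theorem sum_Ico_rpow_sub_le {a b n : ℕ} {p : ℝ} (hbn : b ≤ n) (hp : 0 ≤ p) :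
    ∑ i ∈ Ico a b, ((n - i : ℕ) : ℝ) ^ (-p) * i ≤
      ∑ i ∈ Ico a b, ((n - b + 1 : ℕ) : ℝ) ^ (-p) * i := by
  refine sum_le_sum fun i hi => mul_le_mul_of_nonneg_right ?_ (Nat.cast_nonneg _)
  have hib := (mem_Ico.1 hi).2
  have hle : ((n - b + 1 : ℕ) : ℝ) ≤ ((n - i : ℕ) : ℝ) := by exact_mod_cast (by omega : _)
  exact Real.rpow_le_rpow_of_nonpos (by positivity) hle (neg_nonpos.2 hp)

section Mgen

variable {m : ℕ → ℕ}

theorem Mgen_succ (k : ℕ) : Mgen m (k + 1) = m k * Mgen m k := rfl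

theorem Mgen_pos (hm : ∀ j, 0 < m j) : ∀ k, 0 < Mgen m k
  | 0 => Nat.one_pos
  | k + 1 => Nat.mul_pos (hm k) (Mgen_pos hm k)

theorem Mgen_monotone (hm : ∀ j, 0 < m j) : Monotone (Mgen m) :=
  monotone_nat_of_le_succ fun k => Nat.le_mul_of_pos_left _ (hm k)

theorem Mgen_le_sub {j n s : ℕ} (hm : 2 ≤ m j) (hs : s ≤ Mgen m j)
    (hn : Mgen m (j + 1) ≤ n) : Mgen m j ≤ n - s := by
  have : 2 * Mgen m j ≤ Mgen m (j + 1) := Nat.mul_le_mul_right _ hm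
  omega

theorem Mgen_succ_le_mul {L : ℝ} {j : ℕ} (hL : (m j : ℝ) ≤ L) :
    (Mgen m (j + 1) : ℝ) ≤ L * Mgen m j := by
  rw [Mgen_succ, Nat.cast_mul]
  exact mul_le_mul_of_nonneg_right hL (Nat.cast_nonneg _)

theorem sum_Ico_Mgen_rpow_le {L p : ℝ} (hm : ∀ j, 2 ≤ m j)
    (hL : ∀ j, (m j : ℝ) ≤ L) (hp : 0 ≤ p) {r k n : ℕ} (hrk : r + 1 < k)
    (hkn : Mgen m k ≤ n) :
    ∑ i ∈ Ico (Mgen m r) (Mgen m (r + 1)), ((n - Mgen m (r + 1) + 1 : ℕ) : ℝ) ^ (-p) * i ≤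
      L ^ 2 * L ^ p * (Mgen m r : ℝ) ^ 2 * (Mgen m k : ℝ) ^ (-p) := by
  obtain ⟨j, rfl⟩ : ∃ j, k = j + 1 := ⟨k - 1, by omega⟩
  have hm0 : ∀ j, 0 < m j := fun j => by have := hm j; omega
  have hL0 : 0 < L := by
    have : (2 : ℝ) ≤ m 0 := by exact_mod_cast hm 0
    linarith [hL 0]
  have hdist : Mgen m j ≤ n - Mgen m (r + 1) :=
    Mgen_le_sub (hm j) (Mgen_monotone hm0 (by omega)) hkn
  have hpow : ((n - Mgen m (r + 1) + 1 : ℕ) : ℝ) ^ (-p) ≤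
      L ^ p * (Mgen m (j + 1) : ℝ) ^ (-p) := by
    refine rpow_neg_le_of_le_mul (by exact_mod_cast Mgen_pos hm0 _) hL0 ?_ hp
    refine (Mgen_succ_le_mul (hL j)).trans (mul_le_mul_of_nonneg_left ?_ hL0.le)
    exact_mod_cast hdist.trans (Nat.le_succ _)
  have hsum : ∑ i ∈ Ico (Mgen m r) (Mgen m (r + 1)), (i : ℝ) ≤ L ^ 2 * (Mgen m r : ℝ) ^ 2 := by
    refine (sum_Ico_cast_le_sq _ _).trans ?_
    rw [← mul_pow]
    exact pow_le_pow_left₀ (Nat.cast_nonneg _) (Mgen_succ_le_mul (hL r)) 2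
  rw [← mul_sum]
  calc _ ≤ L ^ p * (Mgen m (j + 1) : ℝ) ^ (-p) * (L ^ 2 * (Mgen m r : ℝ) ^ 2) :=
        mul_le_mul hpow hsum (sum_nonneg fun _ _ => Nat.cast_nonneg _) (by positivity)
    _ = _ := by ring

end Mgen

theorem rpow_mul_sq_mul_rpow_neg_le {a b α : ℝ} (ha : 0 ≤ a) (hab : a ≤ b) :
    b ^ α * (a ^ 2 * b ^ (-(α + 2))) ≤ a / b := by
  rcases ha.eq_or_lt with rfl | ha
  · simp
  have hb : 0 < b := ha.trans_le hab
  have hcollapse : b ^ α * b ^ (-(α + 2)) = (b ^ 2)⁻¹ := by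
    rw [← Real.rpow_add hb, show α + -(α + 2) = -((2 : ℕ) : ℝ) by push_cast; ring,
      Real.rpow_neg hb.le, Real.rpow_natCast]
  calc b ^ α * (a ^ 2 * b ^ (-(α + 2))) = a / b * (a / b) := by
        rw [mul_left_comm, hcollapse]; ring
    _ ≤ a / b * 1 := by gcongr; exact div_le_one_of_le₀ hab hb.le
    _ = a / b := mul_one _

/-- elementary estimates for the middle-frequency sums. -/
theorem middle_sum_estimates (α : ℝ) (hα : α ∈ Set.Ioo (0 : ℝ) 1) (Λ : ℕ) :
    ∃ C : ℝ, 0 < C ∧ ∀ (m : ℕ → ℕ), (∀ j, 2 ≤ m j) → (∀ j, m j ≤ Λ) →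
      ∀ k n : ℕ, Mgen m k ≤ n → n < Mgen m (k + 1) →
      (∀ r : ℕ, 1 ≤ r → r ≤ k - 2 →
        ∑ i ∈ Finset.Ico (Mgen m r) (Mgen m (r + 1)),
            ((n - Mgen m (r + 1) + 1 : ℕ) : ℝ) ^ (-α - 2) * (i : ℝ) ≤
          C * (Mgen m r : ℝ) ^ 2 * (Mgen m k : ℝ) ^ (-α - 2)) ∧
      (Mgen m k : ℝ) ^ α *
          ∑ r ∈ Finset.Icc 1 (k - 2), ∑ i ∈ Finset.Ico (Mgen m r) (Mgen m (r + 1)),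
            ((n - i : ℕ) : ℝ) ^ (-α - 2) * (i : ℝ) ≤
        C * ∑ r ∈ Finset.Icc 1 (k - 2), (Mgen m r : ℝ) / (Mgen m k : ℝ) := by
  set L : ℝ := max (Λ : ℝ) 2
  have hp : 0 ≤ α + 2 := by linarith [hα.1]
  refine ⟨L ^ 2 * L ^ (α + 2), by positivity, fun m hm hmΛ k n hkn _ => ?_⟩
  have hm0 : ∀ j, 0 < m j := fun j => by have := hm j; omega
  have hL : ∀ j, (m j : ℝ) ≤ L := fun j => (Nat.cast_le.2 (hmΛ j)).trans (le_max_left _ _)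
  rw [show -α - 2 = -(α + 2) by ring]
  have block : ∀ r ∈ Icc 1 (k - 2), ∑ i ∈ Ico (Mgen m r) (Mgen m (r + 1)),
      ((n - Mgen m (r + 1) + 1 : ℕ) : ℝ) ^ (-(α + 2)) * i ≤
        L ^ 2 * L ^ (α + 2) * (Mgen m r : ℝ) ^ 2 * (Mgen m k : ℝ) ^ (-(α + 2)) :=
    fun r hr => sum_Ico_Mgen_rpow_le hm hL hp (by grind) hkn
  refine ⟨fun r h1 h2 => block r (mem_Icc.2 ⟨h1, h2⟩), ?_⟩
  calc _ ≤ (Mgen m k : ℝ) ^ α * ∑ r ∈ Icc 1 (k - 2),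
          L ^ 2 * L ^ (α + 2) * (Mgen m r : ℝ) ^ 2 * (Mgen m k : ℝ) ^ (-(α + 2)) := by
        gcongr with r hr
        have hrk : Mgen m (r + 1) ≤ n := (Mgen_monotone hm0 (by grind)).trans hkn
        exact (sum_Ico_rpow_sub_le hrk hp).trans (block r hr)
    _ = L ^ 2 * L ^ (α + 2) * ∑ r ∈ Icc 1 (k - 2),
          (Mgen m k : ℝ) ^ α * ((Mgen m r : ℝ) ^ 2 * (Mgen m k : ℝ) ^ (-(α + 2))) := by
        rw [mul_sum, mul_sum]; congr 1; ext r; ring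
    _ ≤ _ := by
        gcongr with r hr
        exact rpow_mul_sq_mul_rpow_neg_le (Nat.cast_nonneg _)
          (by exact_mod_cast Mgen_monotone hm0 (by grind))
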